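/- arXiv:math/0501271 — 6 statements merged into one kernel-verified Lean document; each statement's English description precedes it below -/
import Mathlib

section
/- (Lambek–Carlitz characterization of completely multiplicative arithmetical functions, Theorem 1.1.) For an arithmetical function f : ℤ⁺ → ℂ, the following statements are equivalent: (1) f is completely multiplicative, i.e. f(mn) = f(m)·f(n) for all m, n ∈ ℤ⁺; (2) f·(g *_D h) = (f·g) *_D (f·h) for all arithmetical functions g and h, where f·g denotes the pointwise product; (3) f·(g *_D g) = (f·g) *_D (f·g) for every arithmetical function g; (4) f·τ = f *_D f, where τ = ζ *_D ζ is the number-of-divisors function. -/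
/-- The Dirichlet convolution of two arithmetical functions
`(f *_D g)(n) = ∑_{d ∣ n} f(d) g(n/d)`. -/
noncomputable def dirichletConv (f g : ℕ → ℂ) : ℕ → ℂ :=
  fun n => ∑ d ∈ n.divisors, f d * g (n / d)

/-- The arithmetical function `ζ`, with `ζ(n) = 1` for all `n ∈ ℤ⁺`. -/
def zetaFn : ℕ → ℂ := fun _ => 1

/-- `τ = ζ *_D ζ`, the number-of-divisors function. -/
noncomputable def tauFn : ℕ → ℂ := dirichletConv zetaFn zetaFn

/-!
(1) ⇒ (2) holds term by term, and (2) ⇒ (3) ⇒ (4) by specialising (`g = ζ`). For (4) ⇒ (1): at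
`n = 1`, (4) says `f 1 = f 1 ^ 2`. If `f 1 = 0`, strong induction shows that `f` vanishes. If
`f 1 = 1`, strong induction shows that `f` equals the completely multiplicative `F` agreeing with
`f` at the primes: for composite `n`, each of the `τ(n) - 2` terms of `(f *_D f)(n)` with
`d ≠ 1, n` equals `F(n)` by induction and the other two give `2 f(n)`, so (4) reads
`τ(n) f(n) = 2 f(n) + (τ(n) - 2) F(n)` with `τ(n) > 2`.
-/

open Finset

lemma tauFn_apply (n : ℕ) : tauFn n = #n.divisors := by
  simp [tauFn, dirichletConv, zetaFn]

lemma mul_dirichletConv_of_completelyMultiplicative {f : ℕ → ℂ}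
    (hf : ∀ m n : ℕ, 0 < m → 0 < n → f (m * n) = f m * f n) (g h : ℕ → ℂ) {n : ℕ} (hn : 0 < n) :
    f n * dirichletConv g h n = dirichletConv (fun k => f k * g k) (fun k => f k * h k) n := by
  rw [dirichletConv, dirichletConv, mul_sum]
  refine sum_congr rfl fun d hd => ?_
  obtain ⟨e, rfl⟩ := Nat.dvd_of_mem_divisors hd
  have hd0 : 0 < d := Nat.pos_of_mul_pos_right hn
  rw [Nat.mul_div_cancel_left e hd0, hf d e hd0 (Nat.pos_of_mul_pos_left hn)]
  ring

section ExtendFromPrimes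

variable {M : Type*} [CommMonoid M]

noncomputable def extendFromPrimes (f : ℕ → M) (n : ℕ) : M :=
  n.factorization.prod fun p k => f p ^ k

@[simp]
lemma extendFromPrimes_one (f : ℕ → M) : extendFromPrimes f 1 = 1 := by
  simp [extendFromPrimes]

lemma extendFromPrimes_prime (f : ℕ → M) {p : ℕ} (hp : p.Prime) : extendFromPrimes f p = f p := by
  simp [extendFromPrimes, hp.factorization, Finsupp.prod_single_index]

lemma extendFromPrimes_mul (f : ℕ → M) {m n : ℕ} (hm : m ≠ 0) (hn : n ≠ 0) :
    extendFromPrimes f (m * n) = extendFromPrimes f m * extendFromPrimes f n := by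
  rw [extendFromPrimes, Nat.factorization_mul hm hn]
  exact Finsupp.prod_add_index' (by simp) fun _ _ _ => pow_add _ _ _

end ExtendFromPrimes

section TauIdentity

variable {f : ℕ → ℂ}

lemma eq_zero_of_map_one_eq_zero (hτ : ∀ n : ℕ, 0 < n → f n * tauFn n = dirichletConv f f n)
    (h1 : f 1 = 0) {n : ℕ} (hn : 0 < n) : f n = 0 := by
  induction n using Nat.strong_induction_on with
  | _ n ih =>
    have hconv : dirichletConv f f n = 0 := by
      refine sum_eq_zero fun d hd => ?_
      obtain ⟨hdn, -⟩ := Nat.mem_divisors.1 hd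
      rcases (Nat.le_of_dvd hn hdn).lt_or_eq with hlt | rfl
      · rw [ih d hlt (Nat.pos_of_dvd_of_pos hdn hn), zero_mul]
      · rw [Nat.div_self hn, h1, mul_zero]
    have hτn : (#n.divisors : ℂ) ≠ 0 := by
      exact_mod_cast (Nat.nonempty_divisors.2 hn.ne').card_ne_zero
    simpa [hconv, tauFn_apply, hτn] using hτ n hn

lemma eq_of_tau_identity_of_not_prime (h1 : f 1 = 1) {n : ℕ} (hn : 1 < n) (hnp : ¬n.Prime)
    (hτn : f n * tauFn n = dirichletConv f f n) {c : ℂ}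
    (hmid : ∀ d ∈ n.divisors \ {1, n}, f d * f (n / d) = c) : f n = c := by
  have hsub : ({1, n} : Finset ℕ) ⊆ n.divisors := by
    simp [insert_subset_iff, show n ≠ 0 by omega]
  have hcard : #(n.divisors \ {1, n}) + 2 = #n.divisors := by
    rw [← card_sdiff_add_card_eq_card hsub, card_pair hn.ne]
  have hends : ∑ d ∈ ({1, n} : Finset ℕ), f d * f (n / d) = 2 * f n := by
    rw [sum_pair hn.ne, Nat.div_one, Nat.div_self (by omega), h1]
    ring
  have hconv : dirichletConv f f n = #(n.divisors \ {1, n}) * c + 2 * f n := by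
    rw [dirichletConv, ← sum_sdiff hsub, sum_congr rfl hmid, sum_const, nsmul_eq_mul, hends]
  have hmid_ne : (#(n.divisors \ {1, n}) : ℂ) ≠ 0 := by
    obtain ⟨a, han, ha2, hlt⟩ := Nat.exists_dvd_of_not_prime2 hn hnp
    have ha : a ∈ n.divisors \ {1, n} := by
      simp [Nat.mem_divisors, han, hlt.ne, show a ≠ 1 by omega, show n ≠ 0 by omega]
    exact_mod_cast (card_pos.2 ⟨a, ha⟩).ne'
  rw [hconv, tauFn_apply, ← hcard] at hτn
  push_cast at hτn
  exact sub_eq_zero.1 ((mul_eq_zero.1 (by linear_combination hτn)).resolve_left hmid_ne)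

lemma eq_extendFromPrimes_of_map_one_eq_one
    (hτ : ∀ n : ℕ, 0 < n → f n * tauFn n = dirichletConv f f n) (h1 : f 1 = 1) {n : ℕ}
    (hn : 0 < n) : f n = extendFromPrimes f n := by
  induction n using Nat.strong_induction_on with
  | _ n ih =>
    obtain rfl | hn1 := (Nat.one_le_iff_ne_zero.2 hn.ne').eq_or_lt
    · simp [h1]
    by_cases hnp : n.Prime
    · exact (extendFromPrimes_prime f hnp).symm
    refine eq_of_tau_identity_of_not_prime h1 hn1 hnp (hτ n hn) fun d hd => ?_
    simp only [mem_sdiff, Nat.mem_divisors, mem_insert, mem_singleton, not_or] at hd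
    obtain ⟨⟨⟨e, rfl⟩, -⟩, hd1, hdn⟩ := hd
    have hd0 : 0 < d := Nat.pos_of_mul_pos_right hn
    have he0 : 0 < e := Nat.pos_of_mul_pos_left hn
    have hdlt : d < d * e := lt_of_le_of_ne (Nat.le_mul_of_pos_right d he0) hdn
    have helt : e < d * e := lt_mul_of_one_lt_left he0 (by omega)
    rw [Nat.mul_div_cancel_left e hd0, ih d hdlt hd0, ih e helt he0,
      extendFromPrimes_mul f hd0.ne' he0.ne']

theorem completelyMultiplicative_of_tau_identity
    (hτ : ∀ n : ℕ, 0 < n → f n * tauFn n = dirichletConv f f n) :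
    ∀ m n : ℕ, 0 < m → 0 < n → f (m * n) = f m * f n := by
  intro m n hm hn
  have h1 : f 1 * (f 1 - 1) = 0 := by
    have := hτ 1 one_pos
    simp only [tauFn_apply, dirichletConv, Nat.divisors_one, sum_singleton, Nat.div_one,
      card_singleton, Nat.cast_one, mul_one] at this
    linear_combination -this
  rcases mul_eq_zero.1 h1 with h0 | h1
  · simp [eq_zero_of_map_one_eq_zero hτ h0, hm, hn]
  · simp only [eq_extendFromPrimes_of_map_one_eq_one hτ (sub_eq_zero.1 h1), hm, hn, mul_pos,
      extendFromPrimes_mul f hm.ne' hn.ne']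

end TauIdentity

/-- Lambek–Carlitz characterization of completely multiplicative arithmetical
functions (Theorem 1.1). -/
theorem stmt_0 (f : ℕ → ℂ) :
    [(∀ m n : ℕ, 0 < m → 0 < n → f (m * n) = f m * f n),
     (∀ g h : ℕ → ℂ, ∀ n : ℕ, 0 < n →
        f n * dirichletConv g h n
          = dirichletConv (fun k => f k * g k) (fun k => f k * h k) n),
     (∀ g : ℕ → ℂ, ∀ n : ℕ, 0 < n →
        f n * dirichletConv g g n
          = dirichletConv (fun k => f k * g k) (fun k => f k * g k) n),
     (∀ n : ℕ, 0 < n → f n * tauFn n = dirichletConv f f n)].TFAE := by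
  tfae_have 1 → 2 := fun hf g h _ hn => mul_dirichletConv_of_completelyMultiplicative hf g h hn
  tfae_have 2 → 3 := fun h g => h g g
  tfae_have 3 → 4 := fun h n hn => by simpa [tauFn, zetaFn] using h zetaFn n hn
  tfae_have 4 → 1 := completelyMultiplicative_of_tau_identity
  tfae_finish
end

section
/- The map η : ℂ[[X]] → 𝒜, from formal power series over ℂ to arithmetical functions, defined by η(Σ_{n≥0} a_n X^n)(m) = ω(m)!·a_{ω(m)} for m ∈ ℤ⁺, is an injective ring homomorphism from (ℂ[[X]], +, ·) into the unitary ring (𝒜, +, *_U); in particular η(F·G) = η(F) *_U η(G) for all formal power series F, G ∈ ℂ[[X]]. -/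
open PowerSeries

/-- The unitary convolution of two arithmetical functions:
`(f *_U g)(n) = ∑_{d ∣ n, gcd(d, n/d) = 1} f(d) g(n/d)`. -/
noncomputable def unitaryConv (f g : ℕ → ℂ) : ℕ → ℂ :=
  fun n => ∑ d ∈ n.divisors.filter (fun d => Nat.Coprime d (n / d)), f d * g (n / d)

/-- The map `η : ℂ[[X]] → 𝒜`, `η(∑ aₙ Xⁿ)(m) = ω(m)! · a_{ω(m)}`, where `ω(m)` is
the number of distinct prime factors of `m`. -/
noncomputable def eta (F : PowerSeries ℂ) : ℕ → ℂ :=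
  fun m => (Nat.factorial m.primeFactors.card : ℂ) * PowerSeries.coeff m.primeFactors.card F

/-! Unitary divisors `d` of `m` correspond to subsets of the prime factors of `m`,
via `d ↦ d.primeFactors` with inverse `S ↦ ∏_{p ∈ S} p ^ v_p(m)`, and
`ω(m / d) = ω(m) - ω(d)`. So with `k = ω(m)`,
`(η F *_U η G)(m) = ∑_j C(k, j) · j! a_j · (k - j)! b_{k - j} = k! · [X^k](F G)`:
through `ω`, `η` is the transform to exponential generating functions. It is injective
because every `k` is `ω` of a product of `k` distinct primes. -/

open Finset
open scoped Nat

namespace Nat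

def unitaryDivisors (m : ℕ) : Finset ℕ := m.divisors.filter fun d => Coprime d (m / d)

lemma mem_unitaryDivisors {m d : ℕ} :
    d ∈ m.unitaryDivisors ↔ (d ∣ m ∧ m ≠ 0) ∧ Coprime d (m / d) := by
  simp [unitaryDivisors]

def primesPart (m : ℕ) (S : Finset ℕ) : ℕ := ∏ p ∈ S, p ^ m.factorization p

section primesPart

variable {m : ℕ} {S : Finset ℕ}

lemma primesPart_ne_zero (hS : S ⊆ m.primeFactors) : m.primesPart S ≠ 0 :=
  prod_ne_zero_iff.2 fun _ hp => pow_ne_zero _ (pos_of_mem_primeFactors (hS hp)).ne'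

lemma primeFactors_primesPart (hS : S ⊆ m.primeFactors) : (m.primesPart S).primeFactors = S := by
  ext p
  rw [mem_primeFactors_of_ne_zero (primesPart_ne_zero hS)]
  constructor
  · rintro ⟨hp, hdvd⟩
    obtain ⟨q, hq, hpq⟩ := (Prime.dvd_finsetProd_iff hp.prime _).1 hdvd
    have hq' := prime_of_mem_primeFactors (hS hq)
    rwa [(prime_dvd_prime_iff_eq hp hq').1 (hp.dvd_of_dvd_pow hpq)]
  · intro hp
    have hp' := hS hp
    refine ⟨prime_of_mem_primeFactors hp', dvd_trans ?_ (dvd_prod_of_mem _ hp)⟩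
    exact dvd_pow_self p (Finsupp.mem_support_iff.1 (support_factorization m ▸ hp'))

lemma primesPart_mul_primesPart_sdiff (hm : m ≠ 0) (hS : S ⊆ m.primeFactors) :
    m.primesPart S * m.primesPart (m.primeFactors \ S) = m := by
  rw [primesPart, primesPart, ← prod_union disjoint_sdiff, union_sdiff_of_subset hS,
    ← prod_primeFactors_pow_factorization hm]

lemma mem_unitaryDivisors_primesPart (hm : m ≠ 0) (hS : S ⊆ m.primeFactors) :
    m.primesPart S ∈ m.unitaryDivisors := by
  have hmul := primesPart_mul_primesPart_sdiff hm hS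
  have hdiv : m / m.primesPart S = m.primesPart (m.primeFactors \ S) :=
    Nat.div_eq_of_eq_mul_right (pos_of_ne_zero (primesPart_ne_zero hS)) hmul.symm
  refine mem_unitaryDivisors.2 ⟨⟨Dvd.intro _ hmul, hm⟩, ?_⟩
  rw [hdiv, ← disjoint_primeFactors (primesPart_ne_zero hS) (primesPart_ne_zero sdiff_subset),
    primeFactors_primesPart hS, primeFactors_primesPart sdiff_subset]
  exact disjoint_sdiff

end primesPart

section unitaryDivisors

variable {m d : ℕ}

lemma primesPart_primeFactors_of_mem_unitaryDivisors (hd : d ∈ m.unitaryDivisors) :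
    m.primesPart d.primeFactors = d := by
  obtain ⟨⟨hdm, hm⟩, hcop⟩ := mem_unitaryDivisors.1 hd
  have hd0 : d ≠ 0 := ne_zero_of_dvd_ne_zero hm hdm
  conv_rhs => rw [prod_primeFactors_pow_factorization hd0]
  refine prod_congr rfl fun p hp => ?_
  have hpe : (m / d).factorization p = 0 := Finsupp.notMem_support_iff.1 <| by
    rw [support_factorization]
    exact disjoint_left.1 hcop.disjoint_primeFactors hp
  have hfac := factorization_mul_apply_of_coprime (p := p) hcop
  rw [Nat.mul_div_cancel' hdm, hpe, add_zero] at hfac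
  rw [hfac]

lemma primeFactors_div_of_mem_unitaryDivisors (hd : d ∈ m.unitaryDivisors) :
    (m / d).primeFactors = m.primeFactors \ d.primeFactors := by
  obtain ⟨⟨hdm, -⟩, hcop⟩ := mem_unitaryDivisors.1 hd
  conv_rhs => rw [← Nat.mul_div_cancel' hdm]
  rw [hcop.primeFactors_mul, union_sdiff_cancel_left hcop.disjoint_primeFactors]

theorem sum_unitaryDivisors_card_primeFactors {M : Type*} [AddCommMonoid M] (hm : m ≠ 0)
    (g : ℕ → ℕ → M) :
    ∑ d ∈ m.unitaryDivisors, g #d.primeFactors #(m / d).primeFactors =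
      ∑ j ∈ range (#m.primeFactors + 1),
        (#m.primeFactors).choose j • g j (#m.primeFactors - j) := by
  rw [← sum_powerset_apply_card (fun j => g j (#m.primeFactors - j))]
  refine sum_nbij' primeFactors m.primesPart (fun d hd => ?_) (fun S hS => ?_)
    (fun d hd => primesPart_primeFactors_of_mem_unitaryDivisors hd)
    (fun S hS => primeFactors_primesPart (mem_powerset.1 hS)) (fun d hd => ?_)
  · exact mem_powerset.2 (primeFactors_mono (mem_unitaryDivisors.1 hd).1.1 hm)
  · exact mem_unitaryDivisors_primesPart hm (mem_powerset.1 hS)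
  · rw [primeFactors_div_of_mem_unitaryDivisors hd, card_sdiff_of_subset
      (primeFactors_mono (mem_unitaryDivisors.1 hd).1.1 hm)]

end unitaryDivisors

theorem exists_card_primeFactors_eq (k : ℕ) : ∃ m, 0 < m ∧ #m.primeFactors = k := by
  obtain ⟨T, hT, hcard⟩ := infinite_setOfPred_prime.exists_subset_card_eq k
  exact ⟨∏ p ∈ T, p, prod_pos fun p hp => (hT hp).pos, by rwa [primeFactors_prod hT]⟩

end Nat

namespace PowerSeries

theorem factorial_mul_coeff_mul {R : Type*} [CommSemiring R] (F G : R⟦X⟧) (k : ℕ) :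
    (k ! : R) * coeff k (F * G) =
      ∑ j ∈ range (k + 1),
        k.choose j • ((j ! * coeff j F) * ((k - j)! * coeff (k - j) G)) := by
  rw [coeff_mul, Nat.sum_antidiagonal_eq_sum_range_succ (fun i j => coeff i F * coeff j G),
    mul_sum]
  refine sum_congr rfl fun j hj => ?_
  rw [nsmul_eq_mul, ← Nat.choose_mul_factorial_mul_factorial (Nat.lt_succ_iff.1 (mem_range.1 hj))]
  push_cast
  ring

end PowerSeries

open Nat

section eta

variable (F G : ℂ⟦X⟧) {m : ℕ}

theorem eta_add : eta (F + G) m = eta F m + eta G m := by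
  simp only [eta, map_add, mul_add]

theorem eta_mul (hm : m ≠ 0) : eta (F * G) m = unitaryConv (eta F) (eta G) m :=
  (factorial_mul_coeff_mul F G _).trans
    (sum_unitaryDivisors_card_primeFactors hm fun i j => (i ! * coeff i F) * (j ! * coeff j G)).symm

theorem eta_one (hm : 0 < m) : eta 1 m = if m = 1 then 1 else 0 := by
  have hω : #m.primeFactors = 0 ↔ m = 1 := by
    rw [Finset.card_eq_zero, primeFactors_eq_empty]
    omega
  by_cases h : m = 1 <;> simp [eta, coeff_one, hω, h]

theorem eq_of_eta_eq (h : ∀ m, 0 < m → eta F m = eta G m) : F = G := by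
  ext k
  obtain ⟨m, hm, hω⟩ := exists_card_primeFactors_eq k
  have := h m hm
  rw [eta, eta, hω] at this
  exact mul_left_cancel₀ (by exact_mod_cast k.factorial_ne_zero) this

end eta

/-- `η` is an injective ring homomorphism from `(ℂ[[X]], +, ·)` into the unitary
ring `(𝒜, +, *_U)` of arithmetical functions: it is additive, sends the Cauchy
product to the unitary convolution, sends `1` to the identity of the unitary ring,
and is injective (as a map into functions on `ℤ⁺`). -/
theorem stmt_4 :
    (∀ F G : PowerSeries ℂ, ∀ m : ℕ, 0 < m → eta (F + G) m = eta F m + eta G m) ∧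
    (∀ F G : PowerSeries ℂ, ∀ m : ℕ, 0 < m → eta (F * G) m = unitaryConv (eta F) (eta G) m) ∧
    (∀ m : ℕ, 0 < m → eta 1 m = if m = 1 then 1 else 0) ∧
    (∀ F G : PowerSeries ℂ, (∀ m : ℕ, 0 < m → eta F m = eta G m) → F = G) :=
  ⟨fun F G _ _ => eta_add F G, fun F G _ hm => eta_mul F G hm.ne', fun _ => eta_one,
    eq_of_eta_eq⟩
end

section
/- (Theorem 1.3, Lambek–Carlitz characterization of exponential series.) Let F = Σ_{n≥0} a_n X^n ∈ ℂ[[X]] be a formal power series with a_1 ≠ 0. The following statements are equivalent: (1) F is an exponential series, i.e. a_n = a_1^n / n! for all n ≥ 0; (2) the arithmetical function η(F), defined by η(F)(m) = ω(m)!·a_{ω(m)}, is multiplicative; (3) F ⊙ (G·H) = (F ⊙ G)·(F ⊙ H) for all G, H ∈ ℂ[[X]]; (4) F ⊙ (G·G) = (F ⊙ G)·(F ⊙ G) for all G ∈ ℂ[[X]]; (5) Σ_{n≥0} 2^n a_n X^n = F·F. -/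
/-!
With `b n = n! * aₙ`, the product `F ⊙ G` multiplies the `n`-th coefficient of `G` by `b n`, and
`η(F)(m) = b (ω m)`. Condition (1) says `F = exp (a₁ X)`, i.e. `b n = a₁ ^ n`; then `F ⊙ G = G(a₁ X)`,
and rescaling is a ring endomorphism, which gives (3) and (4). Applying (4) to `exp X`, whose square
is `exp (2X)`, gives (5): `F(2X) = F(X)²`. The coefficient of `X` in this equation forces `a₀ = 1`
since `a₁ ≠ 0`, and two solutions with the same `a₀ = 1` and `a₁` coincide, so (5) implies (1).
Since `ω` is additive on coprime integers and takes every value, `m ↦ b (ω m)` is multiplicative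
exactly when `b k = (b 1) ^ k`, which is (1) ⇔ (2).
-/

open PowerSeries

/-- The coefficientwise "multiplication" `⊙` of formal power series:
`(∑ aₙ Xⁿ) ⊙ (∑ bₙ Xⁿ) = ∑ n!·aₙ·bₙ Xⁿ`. -/
noncomputable def odot (F G : PowerSeries ℂ) : PowerSeries ℂ :=
  PowerSeries.mk fun n => (Nat.factorial n : ℂ) * PowerSeries.coeff n F * PowerSeries.coeff n G

/-- An arithmetical function is multiplicative if `f(1) = 1` and
`f(mn) = f(m)·f(n)` whenever `gcd(m,n) = 1`. -/
def IsMultArith (f : ℕ → ℂ) : Prop :=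
  f 1 = 1 ∧ ∀ m n : ℕ, 0 < m → 0 < n → Nat.Coprime m n → f (m * n) = f m * f n

open ArithmeticFunction
open scoped ArithmeticFunction.omega Nat

namespace PowerSeries

theorem constantCoeff_rescale {R : Type*} [CommSemiring R] (a : R) (f : R⟦X⟧) :
    constantCoeff (rescale a f) = constantCoeff f := by
  rw [← coeff_zero_eq_constantCoeff_apply, coeff_rescale, pow_zero, one_mul,
    coeff_zero_eq_constantCoeff_apply]

theorem coeff_rescale_exp {A : Type*} [Field A] [CharZero A] (c : A) (n : ℕ) :
    coeff n (rescale c (exp A)) = c ^ n / n ! := by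
  simp [coeff_rescale, coeff_exp, div_eq_mul_inv]

theorem factorial_mul_coeff_rescale_exp {A : Type*} [Field A] [CharZero A] (c : A) (n : ℕ) :
    n ! * coeff n (rescale c (exp A)) = c ^ n := by
  rw [coeff_rescale_exp, mul_div_cancel₀ _ (Nat.cast_ne_zero.2 n.factorial_ne_zero)]

theorem rescale_two_rescale_exp {A : Type*} [CommRing A] [Algebra ℚ A] (c : A) :
    rescale 2 (rescale c (exp A)) = rescale c (exp A) * rescale c (exp A) := by
  rw [exp_mul_exp_eq_exp_add, rescale_rescale, mul_two]

section Functional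

variable {R : Type*} [CommRing R] [IsDomain R] [CharZero R]

theorem constantCoeff_eq_one_of_rescale_two_eq_mul_self {F : R⟦X⟧} (hF : rescale 2 F = F * F)
    (h1 : coeff 1 F ≠ 0) : constantCoeff F = 1 := by
  have h := congrArg (coeff 1) hF
  rw [coeff_rescale, pow_one, coeff_one_mul] at h
  have h' : (constantCoeff F - 1) * (2 * coeff 1 F) = 0 := by linear_combination -h
  simpa [sub_eq_zero, h1] using h'

/-- Comparing the coefficients of `X ^ d` in `F(2X) - G(2X) = (F - G)(F + G)` shows that
`F - G` cannot have order `d ≥ 2`, since `2 ^ d ≠ 2`. -/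
theorem eq_of_rescale_two_eq_mul_self {F G : R⟦X⟧} (hF : rescale 2 F = F * F)
    (hG : rescale 2 G = G * G) (hF0 : constantCoeff F = 1) (hG0 : constantCoeff G = 1)
    (h1 : coeff 1 F = coeff 1 G) : F = G := by
  have hD : rescale 2 (F - G) = (F - G) * (F + G) := by rw [map_sub, hF, hG]; ring
  have step : ∀ d, X ^ (d + 2) ∣ F - G → X ^ (d + 3) ∣ F - G := by
    rintro d ⟨E, hE⟩
    have hE' : C (2 : R) ^ (d + 2) * rescale 2 E = E * (F + G) := by
      apply X_pow_mul_cancel (k := d + 2)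
      rw [← mul_assoc, ← mul_assoc, ← hE, mul_comm (X ^ _), ← mul_pow, ← rescale_X, ← map_pow,
        ← map_mul, ← hE, hD]
    have hE0 : constantCoeff E = 0 := by
      have h2 : (2 : R) ^ (d + 2) ≠ 2 := by
        exact_mod_cast (Nat.pow_lt_pow_right one_lt_two (by omega : 1 < d + 2)).ne'
      have h := congrArg constantCoeff hE'
      simp only [map_mul, map_pow, constantCoeff_C, constantCoeff_rescale, map_add, hF0, hG0] at h
      have h' : ((2 : R) ^ (d + 2) - 2) * constantCoeff E = 0 := by linear_combination h
      simpa [sub_eq_zero, h2] using h'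
    rw [hE, pow_succ]
    exact mul_dvd_mul_left _ (X_dvd_iff.2 hE0)
  have hdvd : ∀ d, X ^ (d + 2) ∣ F - G := by
    intro d
    induction d with
    | zero =>
      refine X_pow_dvd_iff.2 fun m hm => ?_
      interval_cases m <;> simp [hF0, hG0, h1]
    | succ d ih => exact step d ih
  ext n
  simpa [sub_eq_zero] using X_pow_dvd_iff.1 (hdvd n) n (by omega)

end Functional

end PowerSeries

theorem odot_comm (F G : PowerSeries ℂ) : odot F G = odot G F := by
  ext n
  simp only [odot, coeff_mk]
  ring

theorem odot_rescale_exp (c : ℂ) (G : PowerSeries ℂ) :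
    odot (rescale c (exp ℂ)) G = rescale c G := by
  ext n
  rw [odot, coeff_mk, factorial_mul_coeff_rescale_exp, coeff_rescale]

theorem odot_exp (F : PowerSeries ℂ) : odot F (exp ℂ) = F := by
  have h := odot_rescale_exp 1 F
  rwa [rescale_one, RingHom.id_apply, RingHom.id_apply, odot_comm] at h

theorem Nat.card_primeFactors_eq_cardDistinctFactors (n : ℕ) : n.primeFactors.card = ω n := by
  rw [cardDistinctFactors_apply, ← List.card_toFinset]
  rfl

theorem eta_eq_comp_cardDistinctFactors (F : PowerSeries ℂ) : eta F = fun m => (ω m)! * coeff (ω m) F := by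
  funext m
  simp only [eta, Nat.card_primeFactors_eq_cardDistinctFactors]

theorem eta_rescale_exp (c : ℂ) : eta (rescale c (exp ℂ)) = fun m => c ^ ω m := by
  simp only [eta_eq_comp_cardDistinctFactors, factorial_mul_coeff_rescale_exp]

theorem isMultArith_pow_cardDistinctFactors (c : ℂ) : IsMultArith fun m => c ^ ω m :=
  ⟨by simp, fun _ _ _ _ hmn => by simp only [cardDistinctFactors_mul hmn, pow_add]⟩

theorem Nat.exists_prime_coprime {m : ℕ} (hm : 0 < m) : ∃ p, p.Prime ∧ m.Coprime p := by
  obtain ⟨p, hmp, hp⟩ := Nat.exists_infinite_primes (m + 1)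
  exact ⟨p, hp, ((hp.coprime_iff_not_dvd).2 fun h => by
    have := Nat.le_of_dvd hm h; omega).symm⟩

theorem exists_cardDistinctFactors_eq (k : ℕ) : ∃ m, 0 < m ∧ ω m = k := by
  induction k with
  | zero => exact ⟨1, one_pos, cardDistinctFactors_one⟩
  | succ k ih =>
    obtain ⟨m, hm, rfl⟩ := ih
    obtain ⟨p, hp, hmp⟩ := Nat.exists_prime_coprime hm
    exact ⟨m * p, Nat.mul_pos hm hp.pos, by
      rw [cardDistinctFactors_mul hmp, cardDistinctFactors_apply_prime hp]⟩

theorem IsMultArith.eq_pow_of_comp_cardDistinctFactors {g : ℕ → ℂ}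
    (hg : IsMultArith fun m => g (ω m)) (k : ℕ) : g k = g 1 ^ k := by
  induction k with
  | zero => simpa using hg.1
  | succ k ih =>
    obtain ⟨m, hm, rfl⟩ := exists_cardDistinctFactors_eq k
    obtain ⟨p, hp, hmp⟩ := Nat.exists_prime_coprime hm
    have : g (ω (m * p)) = g (ω m) * g (ω p) := hg.2 m p hm hp.pos hmp
    rw [cardDistinctFactors_mul hmp, cardDistinctFactors_apply_prime hp] at this
    rw [this, ih, pow_succ]

/-- Theorem 1.3: Lambek–Carlitz characterization of exponential series. -/
theorem stmt_5 (F : PowerSeries ℂ) (h1 : PowerSeries.coeff 1 F ≠ 0) :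
    [(∀ n : ℕ, PowerSeries.coeff n F = (PowerSeries.coeff 1 F) ^ n / (Nat.factorial n : ℂ)),
     IsMultArith (eta F),
     (∀ G H : PowerSeries ℂ, odot F (G * H) = odot F G * odot F H),
     (∀ G : PowerSeries ℂ, odot F (G * G) = odot F G * odot F G),
     (PowerSeries.mk fun n => (2 : ℂ) ^ n * PowerSeries.coeff n F) = F * F].TFAE := by
  set c := coeff 1 F
  have exp_iff : (∀ n, coeff n F = c ^ n / n !) ↔ F = rescale c (exp ℂ) := by
    simp only [PowerSeries.ext_iff, coeff_rescale_exp]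
  have rescale_two : (PowerSeries.mk fun n => (2 : ℂ) ^ n * coeff n F) = rescale 2 F := by
    ext n; simp [coeff_rescale]
  tfae_have 1 → 3 := by
    rw [exp_iff]
    intro hF G H
    simp only [hF, odot_rescale_exp, map_mul]
  tfae_have 3 → 4 := fun h G => h G G
  tfae_have 4 → 5 := by
    intro h
    have hexp := rescale_two_rescale_exp (1 : ℂ)
    rw [rescale_one, RingHom.id_apply] at hexp
    have h := h (exp ℂ)
    rwa [odot_exp, ← hexp, odot_comm, odot_rescale_exp, ← rescale_two] at h
  tfae_have 5 → 1 := by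
    rw [rescale_two, exp_iff]
    intro h5
    exact eq_of_rescale_two_eq_mul_self h5 (rescale_two_rescale_exp c)
      (constantCoeff_eq_one_of_rescale_two_eq_mul_self h5 h1)
      (by rw [constantCoeff_rescale, constantCoeff_exp])
      (by simp [c])
  tfae_have 1 → 2 := by
    rw [exp_iff]
    intro hF
    rw [hF, eta_rescale_exp]
    exact isMultArith_pow_cardDistinctFactors c
  tfae_have 2 → 1 := by
    intro h2 n
    rw [eta_eq_comp_cardDistinctFactors] at h2
    have := h2.eq_pow_of_comp_cardDistinctFactors (g := fun k => k ! * coeff k F) n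
    simp only [Nat.factorial_one, Nat.cast_one, one_mul] at this
    rw [eq_div_iff (Nat.cast_ne_zero.2 n.factorial_ne_zero), mul_comm, this]
  tfae_finish
end

section
/- (Equivalence (1) ⟺ (2) of Theorem 1.3.) Let F = Σ_{n≥0} a_n X^n ∈ ℂ[[X]] with a_1 ≠ 0. Then the arithmetical function η(F) : m ↦ ω(m)!·a_{ω(m)} is multiplicative if and only if a_n = a_1^n / n! for all n ≥ 0. -/
open PowerSeries

/-! The sequence `b n = n! · aₙ` satisfies `η(F)(m) = b (ω m)`, and `ω` turns coprime products
into sums. As `ω` takes every pair of values on coprime pairs (products of disjoint sets of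
primes), `η(F)` is multiplicative iff `b` is a monoid map `(ℕ, +) → (ℂ, ·)`, i.e. `b n = b 1 ^ n`,
i.e. `aₙ = a₁ⁿ / n!`. -/

lemma Nat.Coprime.card_primeFactors_mul {m n : ℕ} (h : m.Coprime n) :
    (m * n).primeFactors.card = m.primeFactors.card + n.primeFactors.card := by
  rw [h.primeFactors_mul, Finset.card_union_of_disjoint h.disjoint_primeFactors]

lemma Nat.primeFactors_prod_nth_prime (s : Finset ℕ) :
    (∏ i ∈ s, Nat.nth Nat.Prime i).primeFactors = s.image (Nat.nth Nat.Prime) := by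
  have h := Nat.primeFactors_prod (s := s.image (Nat.nth Nat.Prime))
    (by simp [Nat.prime_nth_prime])
  rwa [Finset.prod_image fun i _ j _ hij => Nat.nth_injective Nat.infinite_setOfPred_prime hij]
    at h

lemma Nat.exists_coprime_card_primeFactors (j k : ℕ) :
    ∃ m n : ℕ, 0 < m ∧ 0 < n ∧ m.Coprime n ∧
      m.primeFactors.card = j ∧ n.primeFactors.card = k := by
  have hinj : Function.Injective (Nat.nth Nat.Prime) :=
    Nat.nth_injective Nat.infinite_setOfPred_prime
  have hpos (s : Finset ℕ) : 0 < ∏ i ∈ s, Nat.nth Nat.Prime i :=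
    Finset.prod_pos fun i _ => (Nat.prime_nth_prime i).pos
  refine ⟨∏ i ∈ Finset.range j, Nat.nth Nat.Prime i,
    ∏ i ∈ Finset.Ico j (j + k), Nat.nth Nat.Prime i, hpos _, hpos _, ?_, ?_, ?_⟩
  · rw [← Nat.disjoint_primeFactors (hpos _).ne' (hpos _).ne', Nat.primeFactors_prod_nth_prime,
      Nat.primeFactors_prod_nth_prime, Finset.disjoint_image hinj, Finset.range_eq_Ico]
    exact Finset.Ico_disjoint_Ico_consecutive 0 j (j + k)
  · simp [Nat.primeFactors_prod_nth_prime, Finset.card_image_of_injective _ hinj]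
  · simp [Nat.primeFactors_prod_nth_prime, Finset.card_image_of_injective _ hinj]

lemma isMultArith_comp_card_primeFactors_iff (b : ℕ → ℂ) :
    IsMultArith (fun m => b m.primeFactors.card) ↔
      b 0 = 1 ∧ ∀ j k, b (j + k) = b j * b k := by
  refine ⟨fun ⟨h1, hmul⟩ => ⟨by simpa using h1, fun j k => ?_⟩,
    fun ⟨h0, hadd⟩ => ⟨by simpa using h0, fun m n _ _ hmn => ?_⟩⟩
  · obtain ⟨m, n, hm, hn, hmn, rfl, rfl⟩ := Nat.exists_coprime_card_primeFactors j k
    simpa only [hmn.card_primeFactors_mul] using hmul m n hm hn hmn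
  · simp only [hmn.card_primeFactors_mul, hadd]

lemma map_zero_and_map_add_iff_eq_pow {M : Type*} [Monoid M] (b : ℕ → M) :
    (b 0 = 1 ∧ ∀ j k, b (j + k) = b j * b k) ↔ ∀ n, b n = b 1 ^ n := by
  refine ⟨fun ⟨h0, hadd⟩ n => ?_, fun h => ⟨by simpa using h 0, fun j k => by
    rw [h, h j, h k, pow_add]⟩⟩
  induction n with
  | zero => simpa using h0
  | succ n ih => rw [hadd, ih, pow_succ]

theorem stmt_7_general (F : PowerSeries ℂ) :
    IsMultArith (eta F) ↔
      ∀ n : ℕ, PowerSeries.coeff n F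
        = (PowerSeries.coeff 1 F) ^ n / (Nat.factorial n : ℂ) := by
  set b : ℕ → ℂ := fun n => n.factorial * coeff n F
  have heta : eta F = fun m => b m.primeFactors.card := rfl
  rw [heta, isMultArith_comp_card_primeFactors_iff, map_zero_and_map_add_iff_eq_pow]
  refine forall_congr' fun n => ?_
  have hfac : (n.factorial : ℂ) ≠ 0 := Nat.cast_ne_zero.mpr n.factorial_ne_zero
  simp only [b, Nat.factorial_one, Nat.cast_one, one_mul, eq_div_iff hfac, mul_comm]

/-- Equivalence (1) ⟺ (2) of Theorem 1.3: `η(F)` is multiplicative iff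
`aₙ = a₁ⁿ/n!` for all `n`. -/
theorem stmt_7 (F : PowerSeries ℂ) (h1 : PowerSeries.coeff 1 F ≠ 0) :
    IsMultArith (eta F) ↔
      ∀ n : ℕ, PowerSeries.coeff n F
        = (PowerSeries.coeff 1 F) ^ n / (Nat.factorial n : ℂ) :=
  stmt_7_general F
end

section
/- (Theorem 2.3, Lambek–Carlitz characterization over the Möbius category Red of reduced matrices over GF(q), with B(n) = [n]_q!.) Let q ≥ 2 be a prime power and let F = Σ_{n≥0} a_n X^n ∈ ℂ[[X]] be a formal power series with a_1 ≠ 0. The following statements are equivalent: (1) a_n = a_1^n / [n]_q! for all n ≥ 0; (2) the function hF : ℕ → ℂ, hF(m) = a_m·[m]_q!, is binomial multiplicative, i.e. hF(m+n) = hF(m)·hF(n) for all m, n ≥ 0; (3) F ⊙_q (G·H) = (F ⊙_q G)·(F ⊙_q H) for all G, H ∈ ℂ[[X]]; (4) F ⊙_q (G·G) = (F ⊙_q G)·(F ⊙_q G) for all G ∈ ℂ[[X]]; (5) Σ_{n≥0} G_n(q)·a_n X^n = F·F, where G_n(q) = Σ_{k=0}^{n} [n]_q!/([k]_q!·[n−k]_q!)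 are the Galois numbers. -/
open PowerSeries

/-- The `q`-factorial `[n]_q! = ∏_{i=1}^{n} (1 + q + ⋯ + q^{i-1})`, with `[0]_q! = 1`. -/
def qFactorial (q n : ℕ) : ℕ :=
  ∏ i ∈ Finset.range n, ∑ j ∈ Finset.range (i + 1), q ^ j

/-- The Galois number `Gₙ(q) = ∑_{k=0}^{n} [n]_q!/([k]_q!·[n−k]_q!)` (as a complex number). -/
noncomputable def galoisNumber (q n : ℕ) : ℂ :=
  ∑ k ∈ Finset.range (n + 1),
    (qFactorial q n : ℂ) / ((qFactorial q k : ℂ) * (qFactorial q (n - k) : ℂ))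

/-- The "multiplication" `⊙_q` of formal power series:
`(∑ aₙ Xⁿ) ⊙_q (∑ bₙ Xⁿ) = ∑ [n]_q!·aₙ·bₙ Xⁿ`. -/
noncomputable def odotQ (q : ℕ) (F G : PowerSeries ℂ) : PowerSeries ℂ :=
  PowerSeries.mk fun n => (qFactorial q n : ℂ) * PowerSeries.coeff n F * PowerSeries.coeff n G


/-!
Write `h n = aₙ·[n]_q!`. Since `⊙_q` multiplies the `n`-th coefficient by `h n`, it is
multiplicative exactly when `h` is, and multiplicativity on squares suffices by polarization.
Multiplying the `n`-th coefficient of `(5)` by `[n]_q!` turns it into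
`∑ₖ [n choose k]_q (h n - h k · h (n - k)) = 0`. At `n = 1` this forces `h 0 = 1`; for `n ≥ 2`
the terms `k = 0, n` vanish and, by strong induction, every other term equals
`[n choose k]_q (h n - h 1 ^ n)`. The Gaussian binomials are positive, so `h n = h 1 ^ n`.
-/

open Finset

lemma qFactorial_pos (q n : ℕ) : 0 < qFactorial q n :=
  prod_pos fun _ _ => sum_pos' (fun _ _ => Nat.zero_le _) ⟨0, by simp, by simp⟩

@[simp]
lemma qFactorial_ne_zero (q n : ℕ) : qFactorial q n ≠ 0 :=
  (qFactorial_pos q n).ne'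

lemma qFactorial_cast_ne_zero (q n : ℕ) : (qFactorial q n : ℂ) ≠ 0 :=
  Nat.cast_ne_zero.mpr (qFactorial_ne_zero q n)

@[simp]
lemma qFactorial_zero (q : ℕ) : qFactorial q 0 = 1 := rfl

@[simp]
lemma qFactorial_one (q : ℕ) : qFactorial q 1 = 1 := by
  simp [qFactorial]

noncomputable def qBinomial (q n k : ℕ) : ℂ :=
  qFactorial q n / (qFactorial q k * qFactorial q (n - k))

lemma galoisNumber_eq_sum_qBinomial (q n : ℕ) :
    galoisNumber q n = ∑ k ∈ range (n + 1), qBinomial q n k :=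
  rfl

@[simp]
lemma qBinomial_zero_right (q n : ℕ) : qBinomial q n 0 = 1 := by
  simp [qBinomial]

@[simp]
lemma qBinomial_self (q n : ℕ) : qBinomial q n n = 1 := by
  simp [qBinomial]

lemma qBinomial_mul_qFactorial_mul_qFactorial (q n k : ℕ) :
    qBinomial q n k * qFactorial q k * qFactorial q (n - k) = qFactorial q n := by
  have := qFactorial_cast_ne_zero q k
  have := qFactorial_cast_ne_zero q (n - k)
  rw [qBinomial]
  field_simp

open scoped ComplexOrder in
lemma qBinomial_pos (q n k : ℕ) : 0 < qBinomial q n k := by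
  have hpos (m : ℕ) : (0 : ℝ) < qFactorial q m := Nat.cast_pos.mpr (qFactorial_pos q m)
  have hreal :
      qBinomial q n k = ((qFactorial q n / (qFactorial q k * qFactorial q (n - k)) : ℝ) : ℂ) := by
    simp [qBinomial]
  rw [hreal, Complex.zero_lt_real]
  exact div_pos (hpos n) (mul_pos (hpos k) (hpos (n - k)))

/-- The function `h_F` of the paper. -/
noncomputable def qScaledCoeff (q : ℕ) (F : PowerSeries ℂ) (n : ℕ) : ℂ :=
  coeff n F * qFactorial q n

@[simp]
lemma qScaledCoeff_one (q : ℕ) (F : PowerSeries ℂ) : qScaledCoeff q F 1 = coeff 1 F := by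
  simp [qScaledCoeff]

lemma coeff_eq_pow_div_iff (q : ℕ) (F : PowerSeries ℂ) (n : ℕ) :
    coeff n F = coeff 1 F ^ n / qFactorial q n ↔ qScaledCoeff q F n = qScaledCoeff q F 1 ^ n := by
  rw [eq_div_iff (qFactorial_cast_ne_zero q n), qScaledCoeff_one, qScaledCoeff]

@[simp]
lemma coeff_odotQ (q : ℕ) (F G : PowerSeries ℂ) (n : ℕ) :
    coeff n (odotQ q F G) = qScaledCoeff q F n * coeff n G := by
  rw [odotQ, coeff_mk, qScaledCoeff]
  ring

lemma odotQ_add (q : ℕ) (F G H : PowerSeries ℂ) :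
    odotQ q F (G + H) = odotQ q F G + odotQ q F H := by
  ext n
  simp [mul_add]

lemma odotQ_X_pow (q : ℕ) (F : PowerSeries ℂ) (m : ℕ) :
    odotQ q F (X ^ m) = C (qScaledCoeff q F m) * X ^ m := by
  ext n
  rw [coeff_odotQ, coeff_C_mul_X_pow, coeff_X_pow]
  split_ifs with h
  · rw [h, mul_one]
  · rw [mul_zero]

lemma odotQ_mul_iff (q : ℕ) (F : PowerSeries ℂ) :
    (∀ G H, odotQ q F (G * H) = odotQ q F G * odotQ q F H) ↔
      ∀ m n, qScaledCoeff q F (m + n) = qScaledCoeff q F m * qScaledCoeff q F n := by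
  constructor
  · intro h m n
    have := congrArg (coeff (m + n)) (h (X ^ m) (X ^ n))
    rwa [← pow_add, odotQ_X_pow, odotQ_X_pow, odotQ_X_pow, mul_mul_mul_comm, ← map_mul, ← pow_add,
      coeff_C_mul_X_pow, coeff_C_mul_X_pow, if_pos rfl, if_pos rfl] at this
  · intro h G H
    ext n
    simp only [coeff_odotQ, coeff_mul, mul_sum]
    refine sum_congr rfl fun p hp => ?_
    rw [← mem_antidiagonal.mp hp, h]
    ring

lemma map_mul_of_map_mul_self {R S : Type*} [CommRing R] [CommRing S] [IsAddTorsionFree S]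
    (φ : R →+ S) (h : ∀ x, φ (x * x) = φ x * φ x) (x y : R) :
    φ (x * y) = φ x * φ y := by
  have hxy := h (x + y)
  rw [add_mul, mul_add, mul_add, mul_comm y x, map_add, map_add, map_add, h, h, map_add] at hxy
  refine nsmul_right_injective two_ne_zero ?_
  dsimp only
  rw [two_nsmul, two_nsmul]
  linear_combination hxy

lemma galois_eq_mul_self_iff (q : ℕ) (F : PowerSeries ℂ) :
    PowerSeries.mk (fun n => galoisNumber q n * coeff n F) = F * F ↔
      ∀ n, ∑ k ∈ range (n + 1), qBinomial q n k *
        (qScaledCoeff q F n - qScaledCoeff q F k * qScaledCoeff q F (n - k)) = 0 := by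
  rw [← sub_eq_zero, PowerSeries.ext_iff]
  refine forall_congr' fun n => ?_
  rw [← mul_left_inj' (qFactorial_cast_ne_zero q n), map_zero, zero_mul, map_sub, coeff_mk,
    coeff_mul, Nat.sum_antidiagonal_eq_sum_range_succ_mk, galoisNumber_eq_sum_qBinomial, sum_mul,
    sub_mul, sum_mul, sum_mul, ← sum_sub_distrib]
  refine Eq.congr_left (sum_congr rfl fun k _ => ?_)
  rw [qScaledCoeff, qScaledCoeff, qScaledCoeff, ← qBinomial_mul_qFactorial_mul_qFactorial q n k]
  ring

open scoped ComplexOrder in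
lemma eq_pow_of_sum_qBinomial_mul_sub_eq_zero {q : ℕ} {c : ℕ → ℂ} (hc1 : c 1 ≠ 0)
    (h : ∀ n, ∑ k ∈ range (n + 1), qBinomial q n k * (c n - c k * c (n - k)) = 0) (n : ℕ) :
    c n = c 1 ^ n := by
  have hc0 : c 0 = 1 := by
    have h1 := h 1
    simp only [sum_range_succ, sum_range_zero, qBinomial_zero_right, qBinomial_self, Nat.sub_zero,
      Nat.sub_self, one_mul, zero_add] at h1
    exact mul_left_cancel₀ hc1 (by linear_combination -h1 / 2)
  induction n using Nat.strong_induction_on with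
  | _ n ih =>
    match n with
    | 0 => simpa using hc0
    | 1 => simp
    | m + 2 =>
      have hinner : ∀ k ∈ range (m + 1), qBinomial q (m + 2) (k + 1) *
          (c (m + 2) - c (k + 1) * c (m + 2 - (k + 1))) =
            qBinomial q (m + 2) (k + 1) * (c (m + 2) - c 1 ^ (m + 2)) := by
        intro k hk
        have hk : k < m + 1 := mem_range.mp hk
        rw [ih (k + 1) (by omega), ih (m + 2 - (k + 1)) (by omega), ← pow_add,
          Nat.add_sub_cancel' (by omega)]
      have hsum := h (m + 2)
      rw [sum_range_succ, sum_range_succ', sum_congr rfl hinner, ← sum_mul] at hsum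
      simp only [qBinomial_zero_right, qBinomial_self, Nat.sub_zero, Nat.sub_self, hc0, one_mul,
        mul_one, sub_self, add_zero] at hsum
      have hpos : 0 < ∑ k ∈ range (m + 1), qBinomial q (m + 2) (k + 1) :=
        sum_pos (fun k _ => qBinomial_pos q (m + 2) (k + 1)) nonempty_range_add_one
      exact sub_eq_zero.mp ((mul_eq_zero.mp hsum).resolve_left hpos.ne')

theorem stmt_10_general (q : ℕ)
    (F : PowerSeries ℂ) (h1 : PowerSeries.coeff 1 F ≠ 0) :
    [(∀ n : ℕ, PowerSeries.coeff n F
        = (PowerSeries.coeff 1 F) ^ n / (qFactorial q n : ℂ)),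
     (∀ m n : ℕ,
        PowerSeries.coeff (m + n) F * (qFactorial q (m + n) : ℂ)
          = (PowerSeries.coeff m F * (qFactorial q m : ℂ))
              * (PowerSeries.coeff n F * (qFactorial q n : ℂ))),
     (∀ G H : PowerSeries ℂ, odotQ q F (G * H) = odotQ q F G * odotQ q F H),
     (∀ G : PowerSeries ℂ, odotQ q F (G * G) = odotQ q F G * odotQ q F G),
     (PowerSeries.mk fun n => galoisNumber q n * PowerSeries.coeff n F) = F * F].TFAE := by
  tfae_have 1 → 2 := fun h m n => by
    simp only [coeff_eq_pow_div_iff] at h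
    change qScaledCoeff q F (m + n) = qScaledCoeff q F m * qScaledCoeff q F n
    rw [h, h m, h n, pow_add]
  tfae_have 2 ↔ 3 := (odotQ_mul_iff q F).symm
  tfae_have 3 → 4 := fun h G => h G G
  tfae_have 4 → 3 :=
    have := IsAddTorsionFree.of_module_rat (PowerSeries ℂ)
    map_mul_of_map_mul_self (AddMonoidHom.mk' (odotQ q F) (odotQ_add q F))
  tfae_have 2 → 5 := fun h => by
    have hc : ∀ m n, qScaledCoeff q F (m + n) = qScaledCoeff q F m * qScaledCoeff q F n := h
    refine (galois_eq_mul_self_iff q F).mpr fun n => sum_eq_zero fun k hk => ?_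
    rw [← hc, Nat.add_sub_cancel' (mem_range_succ_iff.mp hk), sub_self, mul_zero]
  tfae_have 5 → 1 := fun h n => (coeff_eq_pow_div_iff q F n).mpr <|
    eq_pow_of_sum_qBinomial_mul_sub_eq_zero (by rwa [qScaledCoeff_one])
      ((galois_eq_mul_self_iff q F).mp h) n
  tfae_finish

/-- Theorem 2.3: Lambek–Carlitz characterization over the Möbius category `Red`
of reduced matrices over `GF(q)`, whose parameters are `B(n) = [n]_q!`. -/
theorem stmt_10 (q : ℕ) (hq : IsPrimePow q) (hq2 : 2 ≤ q)
    (F : PowerSeries ℂ) (h1 : PowerSeries.coeff 1 F ≠ 0) :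
    [(∀ n : ℕ, PowerSeries.coeff n F
        = (PowerSeries.coeff 1 F) ^ n / (qFactorial q n : ℂ)),
     (∀ m n : ℕ,
        PowerSeries.coeff (m + n) F * (qFactorial q (m + n) : ℂ)
          = (PowerSeries.coeff m F * (qFactorial q m : ℂ))
              * (PowerSeries.coeff n F * (qFactorial q n : ℂ))),
     (∀ G H : PowerSeries ℂ, odotQ q F (G * H) = odotQ q F G * odotQ q F H),
     (∀ G : PowerSeries ℂ, odotQ q F (G * G) = odotQ q F G * odotQ q F G),
     (PowerSeries.mk fun n => galoisNumber q n * PowerSeries.coeff n F) = F * F].TFAE :=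
  stmt_10_general q F h1
end

section
/- (Theorem 2.2 instantiated at the elementary Möbius category of full binomial type, with parameters B(n) = 1 for all n.) Let F = Σ_{n≥0} a_n X^n ∈ ℂ[[X]] be a formal power series with a_1 ≠ 0. The following statements are equivalent: (1) a_n = n·a_1 for all n ≥ 0; (2) the function hF : ℕ → ℂ, hF(m) = a_m, is binomial additive, i.e. a_{m+n} = a_m + a_n for all m, n ≥ 0; (3) F ⊙₁ (G·H) = (F ⊙₁ G)·H + (F ⊙₁ H)·G for all G, H ∈ ℂ[[X]]; (4) F ⊙₁ (G·G) = 2·(F ⊙₁ G)·G for all G ∈ ℂ[[X]]; (5) Σ_{n≥0} (n+1)·a_n X^n = 2·(Σ_{n≥0} X^n)·F. -/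
/-!
Additivity of `n ↦ aₙ` is exactly the Leibniz rule for `G ↦ F ⊙₁ G`, since
`aᵢ₊ⱼ gᵢ hⱼ = aᵢ gᵢ hⱼ + aⱼ gᵢ hⱼ`. Testing (4) on `G = ∑ Xⁿ`, whose square is `∑ (n+1) Xⁿ`,
gives (5); multiplying (5) by `1 - X = (∑ Xⁿ)⁻¹` yields `a₀ = 0` and `n aₙ₊₁ = (n+1) aₙ`,
which forces `aₙ = n a₁`.
-/

open PowerSeries

/-- The Hadamard (coefficientwise) product `⊙₁` of formal power series,
i.e. the `⊙_ℳ` multiplication of the elementary Möbius category of full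
binomial type, whose parameters are `B(n) = 1`. -/
noncomputable def odotOne (F G : PowerSeries ℂ) : PowerSeries ℂ :=
  PowerSeries.mk fun n => PowerSeries.coeff n F * PowerSeries.coeff n G

section Recurrence

variable {R : Type*} [CommRing R]

theorem coeff_succ_mul_one_sub_X (G : R⟦X⟧) (n : ℕ) :
    coeff (n + 1) (G * (1 - X)) = coeff (n + 1) G - coeff n G := by
  rw [mul_sub, mul_one, map_sub, coeff_succ_mul_X]

theorem coeff_zero_mul_one_sub_X (G : R⟦X⟧) : coeff 0 (G * (1 - X)) = coeff 0 G := by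
  rw [mul_sub, mul_one, map_sub, coeff_zero_mul_X, sub_zero]

theorem coeff_recurrence_of_mk_succ_mul_eq {F : R⟦X⟧}
    (h : (mk fun n => ((n : R) + 1) * coeff n F) = 2 * mk 1 * F) :
    coeff 0 F = 0 ∧ ∀ n : ℕ, (n : R) * coeff (n + 1) F = (n + 1) * coeff n F := by
  have h' : (mk fun n => ((n : R) + 1) * coeff n F) * (1 - X) = 2 * F := by
    rw [h, mul_right_comm, mul_assoc 2, mk_one_mul_one_sub_eq_one, mul_one]
  constructor
  · have h0 := congrArg (coeff 0) h'
    rw [coeff_zero_mul_one_sub_X, coeff_mk, two_mul, map_add] at h0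
    push_cast at h0
    linear_combination -h0
  · intro n
    have hn := congrArg (coeff (n + 1)) h'
    simp only [coeff_succ_mul_one_sub_X, coeff_mk, two_mul, map_add] at hn
    push_cast at hn
    linear_combination hn

theorem eq_nat_mul_of_mul_succ_eq [IsDomain R] [CharZero R] {a : ℕ → R} (h0 : a 0 = 0)
    (hrec : ∀ n : ℕ, (n : R) * a (n + 1) = (n + 1) * a n) (n : ℕ) : a n = n * a 1 := by
  induction n with
  | zero => simp [h0]
  | succ n ih =>
    rcases eq_or_ne n 0 with rfl | hn
    · simp
    · refine mul_left_cancel₀ (Nat.cast_ne_zero.mpr hn) ?_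
      rw [hrec, ih]
      push_cast
      ring

end Recurrence

theorem odotOne_mul_of_additive {F : ℂ⟦X⟧}
    (hF : ∀ m n : ℕ, coeff (m + n) F = coeff m F + coeff n F) (G H : ℂ⟦X⟧) :
    odotOne F (G * H) = odotOne F G * H + odotOne F H * G := by
  ext n
  simp only [odotOne, coeff_mk, coeff_mul, map_add, Finset.mul_sum]
  rw [← Finset.Nat.sum_antidiagonal_swap
    (f := fun p => coeff p.1 F * coeff p.1 H * coeff p.2 G), ← Finset.sum_add_distrib]
  refine Finset.sum_congr rfl fun p hp => ?_
  rw [← Finset.HasAntidiagonal.mem_antidiagonal.mp hp, hF]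
  simp only [Prod.fst_swap, Prod.snd_swap]
  ring

theorem odotOne_mk_one (F : ℂ⟦X⟧) : odotOne F (mk 1) = F := by
  ext n
  simp [odotOne]

theorem odotOne_mk_one_mul_mk_one (F : ℂ⟦X⟧) :
    odotOne F (mk 1 * mk 1) = mk fun n => ((n : ℂ) + 1) * coeff n F := by
  ext n
  rw [← sq, mk_one_pow_eq_mk_choose_add]
  simp [odotOne, add_comm, mul_comm]

theorem stmt_14_general (F : PowerSeries ℂ) :
    [(∀ n : ℕ, PowerSeries.coeff n F = (n : ℂ) * PowerSeries.coeff 1 F),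
     (∀ m n : ℕ, PowerSeries.coeff (m + n) F
        = PowerSeries.coeff m F + PowerSeries.coeff n F),
     (∀ G H : PowerSeries ℂ, odotOne F (G * H) = odotOne F G * H + odotOne F H * G),
     (∀ G : PowerSeries ℂ, odotOne F (G * G) = 2 * odotOne F G * G),
     (PowerSeries.mk fun n => ((n : ℂ) + 1) * PowerSeries.coeff n F)
        = 2 * (PowerSeries.mk fun _ => (1 : ℂ)) * F].TFAE := by
  tfae_have 1 → 2 := fun h m n => by
    rw [h (m + n), h m, h n]
    push_cast
    ring
  tfae_have 2 → 3 := odotOne_mul_of_additive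
  tfae_have 3 → 4 := fun h G => by
    rw [h G G]
    ring
  tfae_have 4 → 5 := fun h => by
    change _ = 2 * mk 1 * F
    have h1 := h (mk 1)
    rw [odotOne_mk_one_mul_mk_one, odotOne_mk_one] at h1
    rw [h1]
    ring
  tfae_have 5 → 1 := fun h =>
    have ⟨h0, hrec⟩ := coeff_recurrence_of_mk_succ_mul_eq h
    eq_nat_mul_of_mul_succ_eq h0 hrec
  tfae_finish

/-- Theorem 2.2 instantiated at the elementary Möbius category of full binomial
type (with `B(n) = 1`, so `t(n) = n + 1`): additive Lambek–Carlitz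
characterization of the series `∑ n·a₁ Xⁿ`. -/
theorem stmt_14 (F : PowerSeries ℂ) (h1 : PowerSeries.coeff 1 F ≠ 0) :
    [(∀ n : ℕ, PowerSeries.coeff n F = (n : ℂ) * PowerSeries.coeff 1 F),
     (∀ m n : ℕ, PowerSeries.coeff (m + n) F
        = PowerSeries.coeff m F + PowerSeries.coeff n F),
     (∀ G H : PowerSeries ℂ, odotOne F (G * H) = odotOne F G * H + odotOne F H * G),
     (∀ G : PowerSeries ℂ, odotOne F (G * G) = 2 * odotOne F G * G),
     (PowerSeries.mk fun n => ((n : ℂ) + 1) * PowerSeries.coeff n F)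
        = 2 * (PowerSeries.mk fun _ => (1 : ℂ)) * F].TFAE :=
  stmt_14_general F
end
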